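/- arXiv:hep-th/0607159 — 2 statements merged into one kernel-verified Lean document; each statement's English description precedes it below -/
import Mathlib

section
/- Let Λ = ℤ^{n+1}/ℤ·(1,1,…,1) be the cocharacter lattice of PGL(n+1), and let ρ be the involution of Λ induced by swapping the last two coordinates of ℤ^{n+1}. If n > 1, then the natural map (Λ^ρ) ⊗ (ℝ/ℤ) → (Λ ⊗ (ℝ/ℤ))^ρ is surjective (hence an isomorphism). -/
/- STATEMENT 0: For Λ = ℤ^{n+1}/ℤ(1,…,1) the cocharacter lattice of PGL(n+1), ρ the
involution induced by swapping the last two coordinates, and n > 1, the natural map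
(Λ^ρ) ⊗ (ℝ/ℤ) → (Λ ⊗ ℝ/ℤ)^ρ is surjective. -/

open TensorProduct

noncomputable section

/-- The circle group ℝ/ℤ. -/
abbrev Circle1 : Type := AddCircle (1 : ℝ)

/-- The diagonal copy of ℤ in ℤ^{n+1}. -/
def diagZ (n : ℕ) : Submodule ℤ (Fin (n + 1) → ℤ) :=
  Submodule.span ℤ {fun _ => (1 : ℤ)}

/-- The cocharacter lattice of PGL(n+1): Λ = ℤ^{n+1}/ℤ·(1,…,1). -/
abbrev PGLlattice (n : ℕ) := (Fin (n + 1) → ℤ) ⧸ diagZ n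

/-- Swapping the last two coordinates of ℤ^{n+1}. -/
def swapLast (n : ℕ) : (Fin (n + 1) → ℤ) →ₗ[ℤ] (Fin (n + 1) → ℤ) :=
  LinearMap.funLeft ℤ ℤ (Equiv.swap ⟨n - 1, by omega⟩ ⟨n, by omega⟩)

/-!
`Λ` is free on the classes `e₀, …, e_{n-1}` of the first `n` standard basis vectors, with
coordinates `[v] ↦ v i - v n`, so every `y ∈ Λ ⊗ A` is `∑ eᵢ ⊗ yᵢ`. The swap fixes `eᵢ` for
`i < n - 1` and turns the coordinate `y₀` into `y₀ - y_{n-1}`; as `n > 1` these are different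
coordinates, so a `ρ`-invariant `y` has `y_{n-1} = 0` and is a sum of tensors `eᵢ ⊗ yᵢ` with `eᵢ`
fixed by `ρ`.
-/

namespace TensorProduct

variable {R M N ι : Type*} [CommRing R] [AddCommGroup M] [Module R M] [AddCommGroup N] [Module R N]

theorem sum_tmul_lid_map_eq_self [Fintype ι] (b : ι → M) (c : ι → M →ₗ[R] R)
    (hbc : ∀ x, ∑ i, c i x • b i = x) (z : M ⊗[R] N) :
    ∑ i, b i ⊗ₜ TensorProduct.lid R N (map (c i) LinearMap.id z) = z := by
  induction z using TensorProduct.induction_on with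
  | zero => simp
  | add z z' hz hz' => simp only [map_add, tmul_add, Finset.sum_add_distrib, hz, hz']
  | tmul x a =>
    simp only [map_tmul, LinearMap.id_apply, lid_tmul, ← smul_tmul, ← sum_tmul, hbc]

theorem tmul_mem_range_map_subtype {P : Submodule R M} {x : M} (hx : x ∈ P) (a : N) :
    x ⊗ₜ a ∈ LinearMap.range (map P.subtype (LinearMap.id : N →ₗ[R] N)) :=
  ⟨⟨x, hx⟩ ⊗ₜ a, rfl⟩

end TensorProduct

namespace PGLlattice

theorem diagZ_le_ker_proj_sub_proj (n : ℕ) (i j : Fin (n + 1)) :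
    diagZ n ≤ LinearMap.ker (LinearMap.proj (R := ℤ) (φ := fun _ => ℤ) i - LinearMap.proj j) := by
  rw [diagZ, Submodule.span_le, Set.singleton_subset_iff]
  simp

def coord {n : ℕ} (i : Fin n) : PGLlattice n →ₗ[ℤ] ℤ :=
  (diagZ n).liftQ (LinearMap.proj i.castSucc - LinearMap.proj (Fin.last n))
    (diagZ_le_ker_proj_sub_proj n _ _)

@[simp]
theorem coord_mk {n : ℕ} (i : Fin n) (v : Fin (n + 1) → ℤ) :
    coord i (Submodule.Quotient.mk v) = v i.castSucc - v (Fin.last n) :=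
  rfl

def basisVec {n : ℕ} (i : Fin n) : PGLlattice n :=
  Submodule.Quotient.mk (Pi.single i.castSucc 1)

theorem sum_coord_smul_basisVec {n : ℕ} (x : PGLlattice n) : ∑ i, coord i x • basisVec i = x := by
  obtain ⟨v, rfl⟩ := Submodule.Quotient.mk_surjective _ x
  have hdiag : ∑ i : Fin n, (v i.castSucc - v (Fin.last n)) • Pi.single i.castSucc 1 - v
      = (-v (Fin.last n)) • fun _ => (1 : ℤ) := by
    funext j
    induction j using Fin.lastCases <;> simp [Finset.sum_apply, Pi.single_apply]
  simp only [coord_mk, basisVec]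
  simp only [← Submodule.mkQ_apply, ← map_smul, ← map_sum]
  rw [Submodule.mkQ_apply, Submodule.mkQ_apply, Submodule.Quotient.eq, hdiag]
  exact Submodule.smul_mem _ _ (Submodule.subset_span rfl)

theorem swapLast_succ (m : ℕ) :
    swapLast (m + 1)
      = LinearMap.funLeft ℤ ℤ (Equiv.swap (Fin.last m).castSucc (Fin.last (m + 1))) :=
  rfl

theorem coord_mk_swapLast {m : ℕ} {i : Fin (m + 1)} (hi : i ≠ Fin.last m) (v : Fin (m + 2) → ℤ) :
    coord i (Submodule.Quotient.mk (swapLast (m + 1) v))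
      = coord i (Submodule.Quotient.mk v) - coord (Fin.last m) (Submodule.Quotient.mk v) := by
  have hi' : i.castSucc ≠ (Fin.last m).castSucc := Fin.castSucc_injective _ |>.ne hi
  simp only [coord_mk, swapLast_succ, LinearMap.funLeft_apply, Equiv.swap_apply_right,
    Equiv.swap_apply_of_ne_of_ne hi' (Fin.castSucc_ne_last i)]
  ring

theorem swapLast_single {m : ℕ} {i : Fin (m + 1)} (hi : i ≠ Fin.last m) :
    swapLast (m + 1) (Pi.single i.castSucc 1) = Pi.single i.castSucc 1 := by
  have hi' : i.castSucc ≠ (Fin.last m).castSucc := Fin.castSucc_injective _ |>.ne hi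
  rw [swapLast_succ, LinearMap.funLeft, LinearMap.coe_mk, AddHom.coe_mk, Pi.single_comp_equiv,
    Equiv.symm_swap, Equiv.swap_apply_of_ne_of_ne hi' (Fin.castSucc_ne_last i)]

section Involution

variable {m : ℕ} {ρ : PGLlattice (m + 1) →ₗ[ℤ] PGLlattice (m + 1)}

theorem basisVec_mem_eqLocus
    (hρ : ∀ v, ρ (Submodule.Quotient.mk v) = Submodule.Quotient.mk (swapLast (m + 1) v))
    {i : Fin (m + 1)} (hi : i ≠ Fin.last m) :
    basisVec i ∈ LinearMap.eqLocus ρ LinearMap.id := by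
  rw [LinearMap.mem_eqLocus, LinearMap.id_apply, basisVec, hρ, swapLast_single hi]

theorem lid_map_coord_map {A : Type*} [AddCommGroup A]
    (hρ : ∀ v, ρ (Submodule.Quotient.mk v) = Submodule.Quotient.mk (swapLast (m + 1) v))
    {i : Fin (m + 1)} (hi : i ≠ Fin.last m) (z : PGLlattice (m + 1) ⊗[ℤ] A) :
    TensorProduct.lid ℤ A (map (coord i) LinearMap.id (map ρ LinearMap.id z))
      = TensorProduct.lid ℤ A (map (coord i) LinearMap.id z)
        - TensorProduct.lid ℤ A (map (coord (Fin.last m)) LinearMap.id z) := by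
  induction z using TensorProduct.induction_on with
  | zero => simp
  | add z z' hz hz' => simp only [map_add, hz, hz']; abel
  | tmul x a =>
    obtain ⟨v, rfl⟩ := Submodule.Quotient.mk_surjective _ x
    simp only [map_tmul, LinearMap.id_apply, TensorProduct.lid_tmul, hρ, coord_mk_swapLast hi,
      sub_smul]

theorem lid_map_coord_last_eq_zero {A : Type*} [AddCommGroup A]
    (hρ : ∀ v, ρ (Submodule.Quotient.mk v) = Submodule.Quotient.mk (swapLast (m + 1) v))
    {i : Fin (m + 1)} (hi : i ≠ Fin.last m) {y : PGLlattice (m + 1) ⊗[ℤ] A}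
    (hy : map ρ LinearMap.id y = y) :
    TensorProduct.lid ℤ A (map (coord (Fin.last m)) LinearMap.id y) = 0 := by
  have hy' := lid_map_coord_map hρ hi y
  rw [hy] at hy'
  exact sub_eq_self.mp hy'.symm

end Involution

end PGLlattice

theorem stmt0 (n : ℕ) (hn : 1 < n)
    (ρ : PGLlattice n →ₗ[ℤ] PGLlattice n)
    (hρ : ∀ v : Fin (n + 1) → ℤ,
      ρ (Submodule.Quotient.mk v) = Submodule.Quotient.mk (swapLast n v))
    (y : (PGLlattice n) ⊗[ℤ] Circle1)
    (hy : TensorProduct.map ρ LinearMap.id y = y) :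
    ∃ x : (LinearMap.eqLocus ρ LinearMap.id) ⊗[ℤ] Circle1,
      TensorProduct.map (LinearMap.eqLocus ρ LinearMap.id).subtype LinearMap.id x = y := by
  obtain ⟨m, rfl⟩ : ∃ m, n = m + 1 := ⟨n - 1, by omega⟩
  have h0 : (0 : Fin (m + 1)) ≠ Fin.last m := by simp [Fin.ext_iff]; omega
  have hlast := PGLlattice.lid_map_coord_last_eq_zero hρ h0 hy
  rw [← LinearMap.mem_range, ← TensorProduct.sum_tmul_lid_map_eq_self PGLlattice.basisVec
    PGLlattice.coord PGLlattice.sum_coord_smul_basisVec y]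
  refine Submodule.sum_mem _ fun i _ => ?_
  by_cases hi : i = Fin.last m
  · simp [hi, hlast]
  · exact TensorProduct.tmul_mem_range_map_subtype (PGLlattice.basisVec_mem_eqLocus hρ hi) _

end
end

section
/- Let L be a finitely generated free abelian group and ρ : L → L an automorphism. Then the cokernel of the natural map (L^ρ) ⊗ (ℝ/ℤ) → (L ⊗ (ℝ/ℤ))^ρ is a finite group. -/
/-! With `f = ρ - 1` and `T = ℝ/ℤ`, both fixed subgroups are kernels: `L^ρ = ker f` and
`(L ⊗ T)^ρ = ker (f ⊗ 1)`. Factor `f` as `L ↠ W ↪ L` with `W = im f`. Right exactness of `⊗ T`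
on `L^ρ → L ↠ W` identifies the image of `ν` with `ker (L ⊗ T → W ⊗ T)`, so the cokernel of `ν`
embeds into `ker (W ⊗ T → L ⊗ T)`. In Smith normal form bases for `W ⊆ L` this kernel embeds into
`∏ᵢ T[aᵢ]` over the elementary divisors `aᵢ ≠ 0`, and each torsion subgroup `T[aᵢ]` is finite. -/

/- STATEMENT 5: L a finitely generated free abelian group, ρ : L → L an automorphism.
Then the cokernel of the natural map ν : (L^ρ) ⊗ (ℝ/ℤ) → (L ⊗ ℝ/ℤ)^ρ is finite.
(L^ρ is presented as a module P embedded in L with image the ρ-fixed elements; F is the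
fixed-point subgroup (L ⊗ ℝ/ℤ)^ρ and N ≤ F is the image of ν, so the cokernel is F ⧸ N.) -/

open TensorProduct

noncomputable section

open LinearMap

theorem Module.Basis.SmithNormalForm.equivFinsuppOfBasisLeft_rTensor_subtype_apply_embedding
    {R M ι T : Type*} [CommRing R] [AddCommGroup M] [Module R M] [AddCommGroup T] [Module R T]
    [DecidableEq ι] {N : Submodule R M} {n : ℕ} (snf : Module.Basis.SmithNormalForm N ι n)
    (w : N ⊗[R] T) (i : Fin n) :
    equivFinsuppOfBasisLeft snf.bM (N.subtype.rTensor T w) (snf.f i) =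
      snf.a i • equivFinsuppOfBasisLeft snf.bN w i := by
  rw [equivFinsuppOfBasisLeft_apply, equivFinsuppOfBasisLeft_apply, ← rTensor_comp_apply,
    snf.coord_apply_embedding_eq_smul_coord, rTensor_smul, LinearMap.smul_apply, map_smul]

theorem Module.Basis.SmithNormalForm.a_ne_zero {R M ι : Type*} [CommRing R] [Nontrivial R]
    [AddCommGroup M] [Module R M] {N : Submodule R M} {n : ℕ}
    (snf : Module.Basis.SmithNormalForm N ι n) (i : Fin n) : snf.a i ≠ 0 := by
  intro hai
  refine snf.bN.ne_zero i (Subtype.ext ?_)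
  rw [snf.snf i, hai, zero_smul, Submodule.coe_zero]

theorem Submodule.finite_ker_rTensor_subtype {R M T : Type*} [CommRing R] [IsDomain R]
    [IsPrincipalIdealRing R] [AddCommGroup M] [Module R M] [Module.Free R M] [Module.Finite R M]
    [AddCommGroup T] [Module R T] (hT : ∀ a : R, a ≠ 0 → {c : T | a • c = 0}.Finite)
    (N : Submodule R M) : Finite (ker (N.subtype.rTensor T)) := by
  classical
  obtain ⟨n, snf⟩ := N.smithNormalForm (Module.Free.chooseBasis R M)
  have hw (w : ker (N.subtype.rTensor T)) (i : Fin n) :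
      snf.a i • equivFinsuppOfBasisLeft snf.bN (w : N ⊗[R] T) i = 0 := by
    rw [← snf.equivFinsuppOfBasisLeft_rTensor_subtype_apply_embedding, w.2, map_zero,
      Finsupp.zero_apply]
  have (i : Fin n) : Finite {c : T // snf.a i • c = 0} := (hT _ (snf.a_ne_zero i)).to_subtype
  refine Finite.of_injective (fun w i ↦ (⟨_, hw w i⟩ : {c : T // snf.a i • c = 0})) ?_
  intro w₁ w₂ h
  refine Subtype.ext ((equivFinsuppOfBasisLeft snf.bN).injective (Finsupp.ext fun i ↦ ?_))
  exact congrArg Subtype.val (congrFun h i)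

theorem AddSubgroup.finite_quotient_of_ker_comp {B C D : Type*} [AddCommGroup B]
    [AddCommGroup C] [AddCommGroup D] (g : B →+ C) (h : C →+ D) [Finite h.ker]
    (F : AddSubgroup B) (N : AddSubgroup F) (hF : ∀ y ∈ F, h (g y) = 0)
    (hN : ∀ z : F, z ∈ N ↔ g z = 0) : Finite (F ⧸ N) := by
  let φ : F →+ h.ker := (g.comp F.subtype).codRestrict h.ker fun z ↦ hF z z.2
  have hNφ : N = φ.ker := by
    ext z
    rw [hN, AddMonoidHom.mem_ker, Subtype.ext_iff]
    rfl
  subst hNφ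
  exact Finite.of_injective _ (QuotientAddGroup.kerLift_injective φ)

theorem AddCircle.finite_torsion_int {𝕜 : Type*} [Field 𝕜] [CharZero 𝕜] (p : 𝕜) (n : ℤ)
    (hn : n ≠ 0) : {c : AddCircle p | n • c = 0}.Finite :=
  finite_torsion_of_isSMulRegular_int p n (.of_ne_zero hn)

theorem stmt5_general (L : Type*) [AddCommGroup L] [Module ℤ L]
    [Module.Free ℤ L] [Module.Finite ℤ L]
    (ρ : L ≃ₗ[ℤ] L)
    -- P is the fixed subgroup L^ρ, embedded in L via j
    (P : Type*) [AddCommGroup P] [Module ℤ P] (j : P →ₗ[ℤ] L)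
    (hjrange : LinearMap.range j = LinearMap.eqLocus ρ.toLinearMap LinearMap.id)
    -- F is the fixed-point subgroup (L ⊗ ℝ/ℤ)^ρ
    (F : AddSubgroup (L ⊗[ℤ] Circle1))
    (hF : ∀ y : L ⊗[ℤ] Circle1,
      y ∈ F ↔ TensorProduct.map ρ.toLinearMap LinearMap.id y = y)
    -- N is the image of the natural map ν = j ⊗ id inside F
    (N : AddSubgroup F)
    (hN : ∀ z : F, z ∈ N ↔
      ∃ x : P ⊗[ℤ] Circle1,
        TensorProduct.map j (LinearMap.id : Circle1 →ₗ[ℤ] Circle1) x = (z : L ⊗[ℤ] Circle1)) :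
    Finite ((↥F) ⧸ N) := by
  set f : L →ₗ[ℤ] L := ρ.toLinearMap - LinearMap.id
  -- ℤ-module structures are unique, but not definitionally: fix the ones the statement uses.
  let : Module ℤ (L ⊗[ℤ] Circle1) := TensorProduct.instModule
  let : Module ℤ (range f) := (range f).module
  let : Module ℤ (range f ⊗[ℤ] Circle1) := TensorProduct.instModule
  have hexact : Function.Exact j f.rangeRestrict := by
    rw [exact_iff, ker_rangeRestrict, hjrange, eqLocus_eq_ker_sub]
  have hexactT := rTensor_exact Circle1 hexact f.surjective_rangeRestrict
  have : Finite ((range f).subtype.rTensor Circle1).toAddMonoidHom.ker :=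
    (range f).finite_ker_rTensor_subtype (AddCircle.finite_torsion_int 1)
  refine AddSubgroup.finite_quotient_of_ker_comp (f.rangeRestrict.rTensor Circle1).toAddMonoidHom
    ((range f).subtype.rTensor Circle1).toAddMonoidHom F N (fun y hy ↦ ?_)
    (fun z ↦ (hN z).trans (hexactT z).symm)
  have hfT : (range f).subtype.rTensor Circle1 ∘ₗ f.rangeRestrict.rTensor Circle1 =
      ρ.toLinearMap.rTensor Circle1 - LinearMap.id := by
    rw [← rTensor_comp, subtype_comp_codRestrict, rTensor_sub, rTensor_id]
  exact congr($hfT y).trans (sub_eq_zero.mpr ((hF y).mp hy))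

theorem stmt5 (L : Type*) [AddCommGroup L] [Module ℤ L]
    [Module.Free ℤ L] [Module.Finite ℤ L]
    (ρ : L ≃ₗ[ℤ] L)
    -- P is the fixed subgroup L^ρ, embedded in L via j
    (P : Type*) [AddCommGroup P] [Module ℤ P] (j : P →ₗ[ℤ] L)
    (hjinj : Function.Injective j)
    (hjrange : LinearMap.range j = LinearMap.eqLocus ρ.toLinearMap LinearMap.id)
    -- F is the fixed-point subgroup (L ⊗ ℝ/ℤ)^ρ
    (F : AddSubgroup (L ⊗[ℤ] Circle1))
    (hF : ∀ y : L ⊗[ℤ] Circle1,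
      y ∈ F ↔ TensorProduct.map ρ.toLinearMap LinearMap.id y = y)
    -- N is the image of the natural map ν = j ⊗ id inside F
    (N : AddSubgroup F)
    (hN : ∀ z : F, z ∈ N ↔
      ∃ x : P ⊗[ℤ] Circle1,
        TensorProduct.map j (LinearMap.id : Circle1 →ₗ[ℤ] Circle1) x = (z : L ⊗[ℤ] Circle1)) :
    Finite ((↥F) ⧸ N) :=
  stmt5_general L ρ P j hjrange F hF N hN

end
end
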